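/- For all real x, ξ and nonnegative integers k ≥ ℓ, one has ∫_ℝ e^{−t^2} H_k(t − x − iξ) H_ℓ(t + x − iξ) dt = 2^k √π ℓ! (−x − iξ)^{k−ℓ} L_ℓ^{(k−ℓ)}(2(x^2 + ξ^2)), where H_k is the Hermite polynomial and L_ℓ^{(ν)} is the generalized Laguerre polynomial. -/

import Mathlib

open Complex

/-- The physicists' Hermite polynomial `H_k(z) = (-1)^k e^{z²} (d/dz)^k e^{-z²}`,
viewed as an entire function of `z ∈ ℂ`. -/
noncomputable def hermiteC (k : ℕ) (z : ℂ) : ℂ :=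
  (-1) ^ k * Complex.exp (z ^ 2) * iteratedDeriv k (fun w : ℂ => Complex.exp (-w ^ 2)) z

/-- The generalized Laguerre polynomial
`L_q^{(ν)}(t) = (t^{-ν} e^t / q!) (d/dt)^q (t^{q+ν} e^{-t})`. -/
noncomputable def genLaguerre (q : ℕ) (ν : ℝ) (t : ℝ) : ℝ :=
  (t ^ (-ν) * Real.exp t / (Nat.factorial q)) *
    iteratedDeriv q (fun s : ℝ => s ^ ((q : ℝ) + ν) * Real.exp (-s)) t

open Polynomial Finset MeasureTheory Filter

/-- Physicists' Hermite polynomials over ℂ. -/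
noncomputable def Hp : ℕ → Polynomial ℂ
  | 0 => 1
  | n+1 => C 2 * X * Hp n - derivative (Hp n)

lemma Hp_zero : Hp 0 = 1 := rfl
lemma Hp_succ (n : ℕ) : Hp (n+1) = C 2 * X * Hp n - derivative (Hp n) := rfl

lemma rodrigues (n : ℕ) : ∀ z : ℂ,
    iteratedDeriv n (fun w : ℂ => Complex.exp (-w ^ 2)) z
      = (-1)^n * (Hp n).eval z * Complex.exp (-z^2) := by
  induction n with
  | zero => intro z; simp [Hp_zero]
  | succ n ih =>
    intro z
    rw [iteratedDeriv_succ, funext ih]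
    have hp : HasDerivAt (fun z : ℂ => (Hp n).eval z) ((derivative (Hp n)).eval z) z :=
      (Hp n).hasDerivAt z
    have he : HasDerivAt (fun z : ℂ => Complex.exp (-z^2)) (-(2*z) * Complex.exp (-z^2)) z := by
      have h0 : HasDerivAt (fun z : ℂ => -z^2) (-(2*z)) z := by
        exact (hasDerivAt_pow 2 z).neg.congr_deriv (by norm_num)
      simpa [mul_comm] using h0.cexp
    have h := ((hp.const_mul ((-1:ℂ)^n)).mul he)
    have h2 : HasDerivAt (fun z : ℂ => (-1:ℂ)^n * (Hp n).eval z * Complex.exp (-z^2))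
        ((-1)^(n+1) * (Hp (n+1)).eval z * Complex.exp (-z^2)) z := by
      refine h.congr_deriv ?_
      simp [Hp_succ]
      ring
    rw [h2.deriv]

lemma hermiteC_eq_eval (k : ℕ) (z : ℂ) : hermiteC k z = (Hp k).eval z := by
  rw [hermiteC, rodrigues]
  have h1 : ((-1:ℂ))^k * (-1)^k = 1 := by rw [← mul_pow]; norm_num
  have h2 : Complex.exp (z^2) * Complex.exp (-z^2) = 1 := by rw [← Complex.exp_add]; simp
  calc (-1:ℂ)^k * Complex.exp (z^2) * ((-1)^k * (Hp k).eval z * Complex.exp (-z^2))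
      = ((-1:ℂ)^k * (-1)^k) * (Complex.exp (z^2) * Complex.exp (-z^2)) * (Hp k).eval z := by ring
    _ = (Hp k).eval z := by rw [h1, h2]; ring

lemma derivative_Hp (n : ℕ) : derivative (Hp (n+1)) = C (2*(n+1) : ℂ) * Hp n := by
  induction n with
  | zero => show derivative (C 2 * X * Hp 0 - derivative (Hp 0)) = _; simp [Hp_zero]
  | succ n ih =>
    conv_lhs => rw [Hp_succ (n+1)]
    simp only [derivative_sub, derivative_mul, derivative_C, derivative_X, ih]
    rw [Hp_succ n]
    have hC : C (2*((n:ℂ)+1+1)) = C (2*((n:ℂ)+1)) + C 2 := by rw [← C_add]; ring_nf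
    push_cast
    rw [hC]
    ring

lemma iterate_derivative_Hp (i : ℕ) : ∀ n : ℕ,
    derivative^[i] (Hp n) = C ((2^i * n.descFactorial i : ℕ) : ℂ) * Hp (n - i) := by
  induction i with
  | zero => intro n; simp
  | succ i ih =>
    intro n
    rw [Function.iterate_succ_apply]
    cases n with
    | zero =>
      simp [Hp_zero]
    | succ n =>
      rw [derivative_Hp n, Polynomial.iterate_derivative_C_mul, ih n,
        Nat.succ_descFactorial_succ]
      rw [← mul_assoc, ← Polynomial.C_mul]
      push_cast
      ring_nf

lemma natDegree_Hp (n : ℕ) : (Hp n).natDegree ≤ n := by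
  induction n with
  | zero => simp [Hp_zero]
  | succ n ih =>
    rw [Hp_succ]
    refine le_trans (natDegree_sub_le _ _) (max_le ?_ ?_)
    · refine le_trans (natDegree_mul_le) ?_
      have : (C (2:ℂ) * X).natDegree ≤ 1 := by
        refine le_trans (natDegree_mul_le) ?_
        simp
      omega
    · have := Polynomial.natDegree_derivative_le (Hp n)
      omega

lemma hasseDeriv_Hp (i n : ℕ) :
    (hasseDeriv i (Hp n)) = C ((2^i * n.choose i : ℕ) : ℂ) * Hp (n - i) := by
  have h := congrFun (Polynomial.factorial_smul_hasseDeriv (R := ℂ) i) (Hp n)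
  simp only [Pi.smul_apply, LinearMap.smul_apply] at h
  rw [iterate_derivative_Hp i n] at h
  have hfac : ((i.factorial : ℂ[X])) ≠ 0 := by
    exact_mod_cast (Nat.cast_ne_zero (R := ℂ[X])).mpr i.factorial_ne_zero
  apply mul_left_cancel₀ hfac
  rw [← nsmul_eq_mul, h, Nat.descFactorial_eq_factorial_mul_choose]
  push_cast [map_mul, map_pow, Polynomial.C_eq_natCast]
  ring

lemma Hp_add (n : ℕ) (z a : ℂ) :
    (Hp n).eval (z + a)
      = ∑ i ∈ range (n+1), ((n.choose i * 2^i : ℕ) : ℂ) * a^i * (Hp (n-i)).eval z := by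
  have h1 : (Hp n).eval (z + a) = (Polynomial.taylor z (Hp n)).eval a := by
    rw [Polynomial.taylor_eval, add_comm]
  rw [h1, Polynomial.eval_eq_sum_range' (n := n+1)
    (lt_of_le_of_lt (le_of_eq (natDegree_taylor (Hp n) z)) (Nat.lt_succ_of_le (natDegree_Hp n)))]
  refine Finset.sum_congr rfl fun i _ => ?_
  rw [Polynomial.taylor_coeff, hasseDeriv_Hp]
  push_cast
  simp
  ring

lemma norm_gaussC (t : ℝ) : ‖Complex.exp (-(t:ℂ)^2)‖ = Real.exp (-t^2) := by
  have h : (-(t:ℂ)^2) = ((-t^2 : ℝ) : ℂ) := by push_cast; ring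
  rw [h, Complex.norm_exp, Complex.ofReal_re]

lemma integrable_monoGauss (i : ℕ) :
    Integrable (fun t : ℝ => (t:ℂ)^i * Complex.exp (-(t:ℂ)^2)) := by
  have h := (integrable_rpow_mul_exp_neg_mul_sq (b := 1) one_pos
    (s := (i:ℝ)) (lt_of_lt_of_le (by norm_num) (Nat.cast_nonneg i))).abs
  refine h.mono' ?_ ?_
  · exact (Continuous.aestronglyMeasurable (by continuity))
  · filter_upwards with t
    rw [norm_mul, norm_pow, norm_gaussC, Real.rpow_natCast, abs_mul, _root_.abs_pow,
      abs_of_pos (Real.exp_pos _), Complex.norm_real, Real.norm_eq_abs, neg_one_mul]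

lemma integrable_polyGauss (Q : Polynomial ℂ) :
    Integrable (fun t : ℝ => Q.eval (t:ℂ) * Complex.exp (-(t:ℂ)^2)) := by
  have : (fun t : ℝ => Q.eval (t:ℂ) * Complex.exp (-(t:ℂ)^2))
      = fun t : ℝ => ∑ i ∈ range (Q.natDegree + 1),
          Q.coeff i * ((t:ℂ)^i * Complex.exp (-(t:ℂ)^2)) := by
    funext t
    rw [Polynomial.eval_eq_sum_range, Finset.sum_mul]
    exact Finset.sum_congr rfl fun i _ => by ring
  rw [this]
  exact integrable_finset_sum _ fun i _ => (integrable_monoGauss i).const_mul _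

lemma tendsto_monoGauss_abs (i : ℕ) :
    Tendsto (fun u : ℝ => u^i * Real.exp (-u^2)) atTop (nhds 0) := by
  have h1 : Tendsto (fun u : ℝ => (u^2)^i * Real.exp (-(u^2))) atTop (nhds 0) :=
    (Real.tendsto_pow_mul_exp_neg_atTop_nhds_zero i).comp
      (tendsto_pow_atTop (two_ne_zero))
  refine squeeze_zero' ?_ ?_ h1
  · filter_upwards [eventually_ge_atTop (0:ℝ)] with u hu
    positivity
  · filter_upwards [eventually_ge_atTop (1:ℝ)] with u hu
    have : u^i ≤ (u^2)^i := by
      apply pow_le_pow_left₀ (by linarith)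
      nlinarith
    apply mul_le_mul_of_nonneg_right this (Real.exp_nonneg _)

lemma tendsto_polyGauss (Q : Polynomial ℂ) (l : Filter ℝ)
    (hl : Tendsto (fun t : ℝ => |t|) l atTop) :
    Tendsto (fun t : ℝ => Q.eval (t:ℂ) * Complex.exp (-(t:ℂ)^2)) l (nhds 0) := by
  have key : ∀ i : ℕ, Tendsto (fun t : ℝ => (t:ℂ)^i * Complex.exp (-(t:ℂ)^2)) l (nhds 0) := by
    intro i
    rw [tendsto_zero_iff_norm_tendsto_zero]
    have : (fun t : ℝ => ‖(t:ℂ)^i * Complex.exp (-(t:ℂ)^2)‖)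
        = (fun u : ℝ => u^i * Real.exp (-u^2)) ∘ (fun t => |t|) := by
      funext t
      simp only [Function.comp_apply, norm_mul, norm_pow, norm_gaussC, Complex.norm_real,
        Real.norm_eq_abs, sq_abs]
    rw [this]
    exact (tendsto_monoGauss_abs i).comp hl
  have : (fun t : ℝ => Q.eval (t:ℂ) * Complex.exp (-(t:ℂ)^2))
      = fun t : ℝ => ∑ i ∈ range (Q.natDegree + 1),
          Q.coeff i * ((t:ℂ)^i * Complex.exp (-(t:ℂ)^2)) := by
    funext t
    rw [Polynomial.eval_eq_sum_range, Finset.sum_mul]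
    exact Finset.sum_congr rfl fun i _ => by ring
  rw [this]
  have := tendsto_finset_sum (range (Q.natDegree + 1))
    (fun i _ => ((key i).const_mul (Q.coeff i)))
  simpa using this

noncomputable def I2 (Q : Polynomial ℂ) : ℂ :=
  ∫ t : ℝ, Q.eval (t:ℂ) * Complex.exp (-(t:ℂ)^2)

lemma I2_C_mul (c : ℂ) (Q : Polynomial ℂ) : I2 (C c * Q) = c * I2 Q := by
  unfold I2
  simp only [eval_mul, eval_C, mul_assoc]
  rw [MeasureTheory.integral_const_mul]

lemma I2_zero : I2 0 = 0 := by unfold I2; simp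

lemma I2_one : I2 1 = (Real.sqrt Real.pi : ℂ) := by
  unfold I2
  have : ∀ t : ℝ, (1 : ℂ[X]).eval (t:ℂ) * Complex.exp (-(t:ℂ)^2)
      = ((Real.exp (-t^2) : ℝ) : ℂ) := by
    intro t
    rw [Polynomial.eval_one, one_mul, Complex.ofReal_exp]
    congr 1
    push_cast
    ring
  simp only [this]
  have h := integral_gaussian 1
  simp only [neg_one_mul] at h
  rw [show (∫ (t:ℝ), ((Real.exp (-t^2) : ℝ) : ℂ)) = ((∫ t:ℝ, Real.exp (-t^2) : ℝ) : ℂ)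
    from integral_ofReal, h]
  norm_num

lemma hasDerivAt_gaussC (z : ℂ) :
    HasDerivAt (fun z : ℂ => Complex.exp (-z^2)) (-(2*z) * Complex.exp (-z^2)) z := by
  have h0 : HasDerivAt (fun z : ℂ => -z^2) (-(2*z)) z := by
    exact (hasDerivAt_pow 2 z).neg.congr_deriv (by norm_num)
  simpa [mul_comm] using h0.cexp

lemma I2_step (r : ℕ) (Q : Polynomial ℂ) : I2 (Hp (r+1) * Q) = I2 (Hp r * derivative Q) := by
  have hu : ∀ t : ℝ, HasDerivAt (fun t : ℝ => Q.eval (t:ℂ)) ((derivative Q).eval (t:ℂ)) t :=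
    fun t => (Q.hasDerivAt (t:ℂ)).comp_ofReal
  have hv : ∀ t : ℝ, HasDerivAt (fun t : ℝ => (Hp r).eval (t:ℂ) * Complex.exp (-(t:ℂ)^2))
      (-((Hp (r+1)).eval (t:ℂ) * Complex.exp (-(t:ℂ)^2))) t := by
    intro t
    have h : HasDerivAt (fun z : ℂ => (Hp r).eval z * Complex.exp (-z^2))
        (-((Hp (r+1)).eval (t:ℂ) * Complex.exp (-(t:ℂ)^2))) (t:ℂ) := by
      have := ((Hp r).hasDerivAt (t:ℂ)).mul (hasDerivAt_gaussC (t:ℂ))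
      refine this.congr_deriv ?_
      rw [Hp_succ]
      simp only [eval_sub, eval_mul, eval_C, eval_X]
      ring
    exact h.comp_ofReal
  have key := MeasureTheory.integral_mul_deriv_eq_deriv_mul_of_integrable
    (u := fun t : ℝ => Q.eval (t:ℂ))
    (v := fun t : ℝ => (Hp r).eval (t:ℂ) * Complex.exp (-(t:ℂ)^2))
    (u' := fun t : ℝ => (derivative Q).eval (t:ℂ))
    (v' := fun t : ℝ => -((Hp (r+1)).eval (t:ℂ) * Complex.exp (-(t:ℂ)^2)))
    (fun t _ => hu t) (fun t _ => hv t) ?_ ?_ ?_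
  · have e1 : (∫ t : ℝ, Q.eval (t:ℂ) * -((Hp (r+1)).eval (t:ℂ) * Complex.exp (-(t:ℂ)^2)))
        = -I2 (Hp (r+1) * Q) := by
      have h3 : (fun t:ℝ => Q.eval (t:ℂ) * -((Hp (r+1)).eval (t:ℂ) * Complex.exp (-(t:ℂ)^2)))
          = fun t:ℝ => -((Hp (r+1)*Q).eval (t:ℂ) * Complex.exp (-(t:ℂ)^2)) := by
        funext t; simp only [eval_mul]; ring
      unfold I2
      rw [h3, MeasureTheory.integral_neg]
    have e2 : (∫ t : ℝ, (derivative Q).eval (t:ℂ) * ((Hp r).eval (t:ℂ) * Complex.exp (-(t:ℂ)^2)))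
        = I2 (Hp r * derivative Q) := by
      unfold I2
      congr 1; funext t; rw [eval_mul]; ring
    rw [e1, e2] at key
    exact neg_injective key
  · apply ((integrable_polyGauss (Hp (r+1) * Q)).neg).congr
    filter_upwards with t
    simp only [Pi.mul_apply, Pi.neg_apply, eval_mul]; ring
  · apply (integrable_polyGauss (Hp r * derivative Q)).congr
    filter_upwards with t
    simp only [Pi.mul_apply, eval_mul]; ring
  · apply (integrable_polyGauss (Hp r * Q)).congr
    filter_upwards with t
    simp only [Pi.mul_apply, eval_mul]; ring

lemma I2_red (r : ℕ) : ∀ Q : Polynomial ℂ, I2 (Hp r * Q) = I2 (derivative^[r] Q) := by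
  induction r with
  | zero => intro Q; rw [show Hp 0 = 1 from rfl, one_mul]; rfl
  | succ r ih =>
    intro Q
    rw [I2_step r Q, ih (derivative Q), ← Function.iterate_succ_apply]

lemma I2_Hp_Hp (m n : ℕ) :
    I2 (Hp m * Hp n)
      = if m = n then ((2^n * n.factorial : ℕ) : ℂ) * (Real.sqrt Real.pi : ℂ) else 0 := by
  rw [I2_red m (Hp n), iterate_derivative_Hp m n, I2_C_mul]
  rcases lt_trichotomy m n with h | h | h
  · -- m < n : I2 (Hp (n - m)) = 0 since n - m ≥ 1
    obtain ⟨d, hd⟩ : ∃ d, n - m = d + 1 := ⟨n - m - 1, by omega⟩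
    have : I2 (Hp (n - m)) = 0 := by
      rw [show Hp (n-m) = Hp (n-m) * 1 by ring, I2_red (n-m) 1, hd,
        Function.iterate_succ_apply, derivative_one]
      rw [show (derivative^[d] (0 : ℂ[X])) = 0 from Polynomial.iterate_derivative_zero]
      unfold I2; simp
    rw [this, mul_zero, if_neg h.ne]
  · subst h
    rw [if_pos rfl, Nat.sub_self, show Hp 0 = 1 from rfl, I2_one, Nat.descFactorial_self]
  · rw [if_neg h.ne', Nat.descFactorial_eq_zero_iff_lt.mpr h, mul_zero, Nat.cast_zero, zero_mul]

lemma main_integral (A B : ℂ) (k ℓ : ℕ) (hkl : ℓ ≤ k) :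
    (∫ t : ℝ, Complex.exp (-(t:ℂ)^2) * (Hp k).eval ((t:ℂ) + A) * (Hp ℓ).eval ((t:ℂ) + B))
      = (Real.sqrt Real.pi : ℂ) * ∑ j ∈ range (ℓ+1),
          ((k.choose (j+(k-ℓ)) * 2^(k+j) * ℓ.choose j * (ℓ-j).factorial : ℕ) : ℂ)
            * A^(j+(k-ℓ)) * B^j := by
  have expand : (fun t : ℝ => Complex.exp (-(t:ℂ)^2) * (Hp k).eval ((t:ℂ) + A)
        * (Hp ℓ).eval ((t:ℂ) + B))
      = fun t : ℝ => ∑ i ∈ range (k+1), ∑ j ∈ range (ℓ+1),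
          (((k.choose i * 2^i : ℕ) : ℂ) * A^i * (((ℓ.choose j * 2^j : ℕ) : ℂ) * B^j))
            * ((Hp (k-i) * Hp (ℓ-j)).eval (t:ℂ) * Complex.exp (-(t:ℂ)^2)) := by
    funext t
    rw [Hp_add k (t:ℂ) A, Hp_add ℓ (t:ℂ) B, mul_assoc, Finset.sum_mul_sum, Finset.mul_sum]
    refine Finset.sum_congr rfl fun i _ => ?_
    rw [Finset.mul_sum]
    refine Finset.sum_congr rfl fun j _ => ?_
    rw [eval_mul]
    ring
  rw [expand, MeasureTheory.integral_finset_sum]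
  swap
  · intro i _
    exact integrable_finset_sum _ fun j _ =>
      ((integrable_polyGauss (Hp (k-i) * Hp (ℓ-j))).const_mul _)
  have step2 : ∀ i ∈ range (k+1),
      (∫ t : ℝ, ∑ j ∈ range (ℓ+1),
          (((k.choose i * 2^i : ℕ) : ℂ) * A^i * (((ℓ.choose j * 2^j : ℕ) : ℂ) * B^j))
            * ((Hp (k-i) * Hp (ℓ-j)).eval (t:ℂ) * Complex.exp (-(t:ℂ)^2)))
        = ∑ j ∈ range (ℓ+1),
            (((k.choose i * 2^i : ℕ) : ℂ) * A^i * (((ℓ.choose j * 2^j : ℕ) : ℂ) * B^j))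
              * I2 (Hp (k-i) * Hp (ℓ-j)) := by
    intro i _
    rw [MeasureTheory.integral_finset_sum]
    · exact Finset.sum_congr rfl fun j _ => MeasureTheory.integral_const_mul _ _
    · intro j _
      exact ((integrable_polyGauss (Hp (k-i) * Hp (ℓ-j))).const_mul _)
  rw [Finset.sum_congr rfl step2]
  -- now collapse the double sum
  rw [Finset.sum_comm]
  rw [Finset.mul_sum]
  refine Finset.sum_congr rfl fun j hj => ?_
  rw [Finset.mem_range] at hj
  have hj' : j ≤ ℓ := by omega
  have conv1 : ∀ i ∈ range (k+1),
      (((k.choose i * 2^i : ℕ) : ℂ) * A^i * (((ℓ.choose j * 2^j : ℕ) : ℂ) * B^j))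
          * I2 (Hp (k-i) * Hp (ℓ-j))
        = if i = j + (k-ℓ) then
            (((k.choose i * 2^i : ℕ) : ℂ) * A^i * (((ℓ.choose j * 2^j : ℕ) : ℂ) * B^j))
              * (((2^(ℓ-j) * (ℓ-j).factorial : ℕ) : ℂ) * (Real.sqrt Real.pi : ℂ))
          else 0 := by
    intro i hi
    rw [Finset.mem_range] at hi
    rw [I2_Hp_Hp]
    by_cases h : i = j + (k-ℓ)
    · rw [if_pos h, if_pos (by omega)]
    · rw [if_neg h, if_neg (by omega), mul_zero]
  rw [Finset.sum_congr rfl conv1, Finset.sum_ite_eq' (range (k+1)) (j+(k-ℓ))]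
  rw [if_pos (by rw [Finset.mem_range]; omega)]
  push_cast
  rw [show k + j = (j+(k-ℓ)) + j + (ℓ-j) by omega, pow_add, pow_add]
  ring

lemma iteratedDeriv_polyExp (P : Polynomial ℝ) (m : ℕ) : ∀ s : ℝ,
    iteratedDeriv m (fun s : ℝ => P.eval s * Real.exp (-s)) s
      = ((fun q : Polynomial ℝ => derivative q - q)^[m] P).eval s * Real.exp (-s) := by
  induction m with
  | zero => intro s; simp
  | succ m ih =>
    intro s
    rw [iteratedDeriv_succ, funext ih, Function.iterate_succ_apply']
    set Q := (fun q : Polynomial ℝ => derivative q - q)^[m] P with hQ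
    have h : HasDerivAt (fun s : ℝ => Q.eval s * Real.exp (-s))
        ((derivative Q - Q).eval s * Real.exp (-s)) s := by
      have he : HasDerivAt (fun s : ℝ => Real.exp (-s)) (Real.exp (-s) * (-1)) s :=
        ((hasDerivAt_id s).neg).exp
      have := (Q.hasDerivAt s).mul he
      refine this.congr_deriv ?_
      simp only [eval_sub]
      ring
    rw [h.deriv]

lemma LOp_pow (m : ℕ) (P : Polynomial ℝ) :
    (fun q : Polynomial ℝ => derivative q - q)^[m] P
      = ∑ j ∈ range (m+1), ((-1:ℝ)^(m-j) * m.choose j) • derivative^[j] P := by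
  set D : Module.End ℝ (Polynomial ℝ) := Polynomial.derivative with hD
  have h1 : (fun q : Polynomial ℝ => derivative q - q) = ⇑(D - 1) := by
    funext q; simp [hD]
  have hneg : ∀ (i : ℕ) (q : Polynomial ℝ), (((-1 : Module.End ℝ (Polynomial ℝ))^i)) q
      = ((-1:ℝ)^i) • q := by
    intro i q
    induction i generalizing q with
    | zero => simp
    | succ n ih =>
      rw [pow_succ, Module.End.mul_apply,
        show ((-1 : Module.End ℝ (Polynomial ℝ))) q = -q from rfl, map_neg, ih,
        pow_succ, ← neg_smul, mul_neg_one]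
  rw [h1, ← Module.End.pow_apply, sub_eq_add_neg, Commute.add_pow (Commute.neg_one_right D),
    LinearMap.sum_apply]
  refine Finset.sum_congr rfl fun j hj => ?_
  rw [mul_assoc, Module.End.mul_apply, Module.End.mul_apply, Module.End.natCast_apply,
    ← Nat.cast_smul_eq_nsmul ℝ, hneg, _root_.map_smul, _root_.map_smul, smul_smul, Module.End.pow_apply, hD]

lemma genLaguerre_eq (k ℓ : ℕ) (hkl : ℓ ≤ k) (T : ℝ) (hT : 0 < T) :
    genLaguerre ℓ ((k:ℝ) - ℓ) T
      = ∑ m ∈ range (ℓ+1), (-1:ℝ)^m * (k.choose (ℓ-m)) * T^m / m.factorial := by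
  unfold genLaguerre
  have hfun : (fun s : ℝ => s ^ ((ℓ:ℝ) + ((k:ℝ) - ℓ)) * Real.exp (-s))
      = fun s : ℝ => (X^k : Polynomial ℝ).eval s * Real.exp (-s) := by
    funext s
    rw [show (ℓ:ℝ) + ((k:ℝ) - ℓ) = ((k:ℕ):ℝ) by ring, Real.rpow_natCast]
    simp
  rw [hfun, iteratedDeriv_polyExp, LOp_pow]
  rw [Polynomial.eval_finset_sum]
  simp only [eval_smul, Polynomial.iterate_derivative_X_pow_eq_natCast_mul, eval_mul, eval_pow,
    eval_X, eval_natCast, smul_eq_mul]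
  rw [Finset.sum_mul, Finset.mul_sum]
  conv_lhs => rw [← Finset.sum_range_reflect]
  refine Finset.sum_congr rfl fun m hm => ?_
  rw [Finset.mem_range] at hm
  have hm' : m ≤ ℓ := by omega
  rw [show ℓ + 1 - 1 - m = ℓ - m by omega]
  rw [show ℓ - (ℓ - m) = m by omega]
  rw [show k - (ℓ - m) = m + (k - ℓ) by omega]
  rw [Nat.choose_symm hm']
  rw [show -((k:ℝ) - ↑ℓ) = (ℓ:ℝ) - ↑k by ring]
  rw [pow_add]
  have hkey : T ^ ((ℓ:ℝ) - ↑k) * T^(k-ℓ) = 1 := by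
    rw [← Real.rpow_natCast T (k-ℓ), ← Real.rpow_add hT]
    rw [show (ℓ:ℝ) - ↑k + ((k-ℓ : ℕ) : ℝ) = 0 by push_cast [Nat.cast_sub hkl]; ring]
    exact Real.rpow_zero T
  have hexp : Real.exp T * Real.exp (-T) = 1 := by
    rw [← Real.exp_add]; simp
  have hnat : (ℓ.choose m : ℝ) * (k.descFactorial (ℓ-m) : ℝ) * (m.factorial : ℝ)
      = (k.choose (ℓ-m) : ℝ) * (ℓ.factorial : ℝ) := by
    have h := Nat.descFactorial_eq_factorial_mul_choose k (ℓ-m)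
    have h3 : ℓ.choose m * k.descFactorial (ℓ-m) * m.factorial
        = k.choose (ℓ-m) * ℓ.factorial := by
      rw [h, ← Nat.choose_mul_factorial_mul_factorial hm']
      ring
    exact_mod_cast congrArg (fun n : ℕ => (n:ℝ)) h3
  have hfac : (ℓ.factorial : ℝ) ≠ 0 := by positivity
  have hmfac : (m.factorial : ℝ) ≠ 0 := by positivity
  field_simp
  linear_combination ((ℓ.choose m : ℝ) * (k.descFactorial (ℓ-m) : ℝ)
      * (m.factorial : ℝ) * (T ^ ((ℓ:ℝ) - ↑k) * T^(k-ℓ))) * hexp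
    + ((ℓ.choose m:ℝ) * (k.descFactorial (ℓ-m):ℝ)
      * (m.factorial:ℝ)) * hkey
    + hnat

lemma genLaguerre_zero (ℓ : ℕ) : genLaguerre ℓ ((ℓ:ℝ) - ℓ) 0 = 1 := by
  unfold genLaguerre
  have hfun : (fun s : ℝ => s ^ ((ℓ:ℝ) + ((ℓ:ℝ) - ℓ)) * Real.exp (-s))
      = fun s : ℝ => (X^ℓ : Polynomial ℝ).eval s * Real.exp (-s) := by
    funext s
    rw [show (ℓ:ℝ) + ((ℓ:ℝ) - ℓ) = ((ℓ:ℕ):ℝ) by ring, Real.rpow_natCast]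
    simp
  rw [hfun, iteratedDeriv_polyExp, LOp_pow, Polynomial.eval_finset_sum]
  simp only [eval_smul, Polynomial.iterate_derivative_X_pow_eq_natCast_mul, eval_mul, eval_pow,
    eval_X, eval_natCast, smul_eq_mul]
  rw [Finset.sum_eq_single ℓ]
  · rw [sub_self, neg_zero, Real.rpow_zero, Nat.sub_self, Nat.descFactorial_self]
    rw [pow_zero, pow_zero]
    have : (ℓ.factorial : ℝ) ≠ 0 := by positivity
    field_simp
    simp
  · intro j hj hne
    rw [Finset.mem_range] at hj
    rw [zero_pow (by omega : ℓ - j ≠ 0)]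
    ring
  · intro h; exact absurd (Finset.self_mem_range_succ ℓ) h


/-- For `k ≥ ℓ`:
`∫_ℝ e^{-t²} H_k(t - x - iξ) H_ℓ(t + x - iξ) dt
  = 2^k √π ℓ! (-x - iξ)^{k-ℓ} L_ℓ^{(k-ℓ)}(2(x² + ξ²))`. -/
theorem hermite_integral_laguerre (x ξ : ℝ) (k ℓ : ℕ) (hkl : ℓ ≤ k) :
    (∫ t : ℝ, Complex.exp (-(t : ℂ) ^ 2) *
        hermiteC k ((t : ℂ) - (x : ℂ) - Complex.I * (ξ : ℂ)) *
        hermiteC ℓ ((t : ℂ) + (x : ℂ) - Complex.I * (ξ : ℂ)))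
      = 2 ^ k * (Real.sqrt Real.pi : ℂ) * (Nat.factorial ℓ : ℂ) *
          (-(x : ℂ) - Complex.I * (ξ : ℂ)) ^ (k - ℓ) *
          ((genLaguerre ℓ ((k : ℝ) - (ℓ : ℝ)) (2 * (x ^ 2 + ξ ^ 2)) : ℝ) : ℂ) := by
  set A : ℂ := -(x : ℂ) - Complex.I * (ξ : ℂ) with hA
  set B : ℂ := (x : ℂ) - Complex.I * (ξ : ℂ) with hB
  have hint : (fun t : ℝ => Complex.exp (-(t : ℂ) ^ 2) *
        hermiteC k ((t : ℂ) - (x : ℂ) - Complex.I * (ξ : ℂ)) *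
        hermiteC ℓ ((t : ℂ) + (x : ℂ) - Complex.I * (ξ : ℂ)))
      = fun t : ℝ => Complex.exp (-(t:ℂ)^2) * (Hp k).eval ((t:ℂ) + A)
          * (Hp ℓ).eval ((t:ℂ) + B) := by
    funext t
    rw [hermiteC_eq_eval, hermiteC_eq_eval,
      show (t:ℂ) - (x:ℂ) - Complex.I * (ξ:ℂ) = (t:ℂ) + A by rw [hA]; ring,
      show (t:ℂ) + (x:ℂ) - Complex.I * (ξ:ℂ) = (t:ℂ) + B by rw [hB]; ring]
  rw [hint, main_integral A B k ℓ hkl]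
  by_cases hT : (2:ℝ) * (x^2 + ξ^2) = 0
  · have hx : x = 0 := by nlinarith [sq_nonneg x, sq_nonneg ξ]
    have hxi : ξ = 0 := by nlinarith [sq_nonneg x, sq_nonneg ξ]
    subst hx; subst hxi
    have hA0 : A = 0 := by rw [hA]; simp
    have hB0 : B = 0 := by rw [hB]; simp
    rcases Nat.eq_or_lt_of_le hkl with heq | hlt
    · subst heq
      rw [hA0, hB0, show (2:ℝ) * ((0:ℝ)^2 + (0:ℝ)^2) = 0 by norm_num]
      simp only [Nat.sub_self, add_zero, pow_zero, genLaguerre_zero]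
      rw [Finset.sum_eq_single 0]
      · push_cast
        simp
        ring
      · intro j hj hne
        rw [zero_pow hne]
        ring
      · intro h; exact absurd (Finset.mem_range.mpr (by omega)) h
    · rw [hA0, hB0, Finset.sum_eq_zero, mul_zero,
        zero_pow (by omega : k - ℓ ≠ 0)]
      · ring
      · intro j hj
        rw [zero_pow (by omega : j + (k-ℓ) ≠ 0)]
        ring
  · have hT' : 0 < 2*(x^2+ξ^2) := lt_of_le_of_ne (by positivity) (Ne.symm hT)
    rw [genLaguerre_eq k ℓ hkl _ hT']
    push_cast
    rw [Finset.mul_sum, Finset.mul_sum]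
    refine Finset.sum_congr rfl fun j hj => ?_
    rw [Finset.mem_range] at hj
    have hj' : j ≤ ℓ := by omega
    have hAB : (2:ℂ) * ((x:ℂ)^2 + (ξ:ℂ)^2) = -(2 * (A * B)) := by
      rw [hA, hB]
      linear_combination (2*(ξ:ℂ)^2) * Complex.I_sq
    have hneg1 : ((-1:ℂ))^j * (-1)^j = 1 := by rw [← mul_pow]; norm_num
    have hjfac : ((j.factorial : ℂ)) ≠ 0 := by exact_mod_cast j.factorial_ne_zero
    have hfact : ((ℓ.choose j : ℂ)) * (j.factorial : ℂ) * ((ℓ-j).factorial : ℂ)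
        = (ℓ.factorial : ℂ) := by
      exact_mod_cast congrArg (fun n:ℕ => (n:ℂ))
        (Nat.choose_mul_factorial_mul_factorial hj')
    rw [show k.choose (j+(k-ℓ)) = k.choose (ℓ-j) from by
      rw [show j+(k-ℓ) = k - (ℓ-j) by omega]; exact Nat.choose_symm (by omega)]
    have hABj : ((2:ℂ) * ((x:ℂ)^2 + (ξ:ℂ)^2))^j = (-1)^j * (2^j * (A^j * B^j)) := by
      rw [hAB, show (-(2 * (A * B)) : ℂ) = (-1) * (2 * (A*B)) by ring, mul_pow, mul_pow, mul_pow]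
    rw [hABj, pow_add A j (k-ℓ), pow_add (2:ℂ) k j]
    field_simp
    ring_nf
    linear_combination (A^j * A^(k-ℓ) * B^j
        * ((k.choose (ℓ-j) : ℂ))) * hfact
      - (A^j * A^(k-ℓ) * B^j
        * ((k.choose (ℓ-j) : ℂ)) * (ℓ.factorial : ℂ)) * hneg1
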